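/- Let G₁ * ⋯ * Gₙ be the free profinite product of profinite groups, and for each i let Hᵢ ≤ Gᵢ be a closed subgroup. Then the closed subgroup of G₁ * ⋯ * Gₙ generated by the images of H₁, …, Hₙ is (canonically isomorphic to) the free profinite product H₁ * ⋯ * Hₙ. -/

import Mathlib

/-- `G` together with the embeddings `ε i : Gf i →* G` is the free profinite product of the
profinite groups `Gf i`: every family of continuous homomorphisms into a profinite group
factors uniquely through `G`. -/
def IsFreeProfiniteProduct {n : ℕ} (Gf : Fin n → Type u)
    [∀ i, Group (Gf i)] [∀ i, TopologicalSpace (Gf i)]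
    (G : Type u) [Group G] [TopologicalSpace G] (ε : ∀ i, Gf i →* G) : Prop :=
  (∀ i, Continuous (ε i)) ∧ (∀ i, Function.Injective (ε i)) ∧
  ∀ (H : Type u) (_ : Group H) (_ : TopologicalSpace H) (_ : IsTopologicalGroup H)
    (_ : CompactSpace H) (_ : T2Space H) (_ : TotallyDisconnectedSpace H)
    (γ : ∀ i, Gf i →* H), (∀ i, Continuous (γ i)) →
      ∃! δ : G →* H, Continuous δ ∧ ∀ i, δ.comp (ε i) = γ i

/-!
Let `S` be the closed subgroup generated by the `εᵢ(Hᵢ)` and `γᵢ : Hᵢ → K` continuous, `K`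
profinite. The closed subgroup `Γ ≤ G × K` generated by the pairs `(εᵢ h, γᵢ h)` is compact and
projects onto `S`; if the projection is injective it is a homeomorphism and `snd ∘ fst⁻¹` extends
the `γᵢ` (uniquely, by density). Injectivity only has to be tested in the finite quotients `K ⧸ N`.

For a finite target `A`, extend `γᵢ` to the open subgroup `Uᵢ = Hᵢ ⊔ Nᵢ`, where `Nᵢ` is open normal
and killed by `γᵢ`, and induce it up to `Gᵢ → A ≀ Sym Ω` with `Ω = ∏ⱼ Gⱼ ⧸ Uⱼ`. By freeness these
come from one `G → A ≀ Sym Ω` with open kernel; `S` stabilises the base point `(Uⱼ)ⱼ`, and the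
`A`-coordinate at the base point is the required homomorphism on `S`.
-/

universe u

theorem MonoidHom.isOpen_ker {G K : Type*} [Group G] [TopologicalSpace G] [Group K]
    [TopologicalSpace K] [DiscreteTopology K] {f : G →* K} (hf : Continuous f) :
    IsOpen (f.ker : Set G) :=
  (isOpen_discrete ({1} : Set K)).preimage hf

section TopologicalGroup

variable {G K : Type*} [Group G] [TopologicalSpace G] [IsTopologicalGroup G]

theorem MonoidHom.continuous_of_isOpen_ker [Group K] [TopologicalSpace K] [DiscreteTopology K]
    (f : G →* K) (hf : IsOpen (f.ker : Set G)) : Continuous f :=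
  continuous_of_continuousAt_one f <| by
    rw [ContinuousAt, nhds_discrete K, map_one, Filter.tendsto_pure]
    exact hf.mem_nhds (map_one f)

theorem Subgroup.topologicalClosure_iSup_hom_ext [Group K] [TopologicalSpace K] [T2Space K]
    {ι : Sort*} {S : ι → Subgroup G} {f g : (⨆ i, S i).topologicalClosure →* K}
    (hf : Continuous f) (hg : Continuous g)
    (h : ∀ i x (hx : x ∈ S i), f ⟨x, le_topologicalClosure _ (mem_iSup_of_mem i hx)⟩
      = g ⟨x, le_topologicalClosure _ (mem_iSup_of_mem i hx)⟩) : f = g := by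
  have hdense : Dense (Subtype.val ⁻¹' (⨆ i, S i : Subgroup G) :
      Set (⨆ i, S i).topologicalClosure) := by
    refine Topology.IsInducing.subtypeVal.dense_iff.mpr fun ⟨x, hx⟩ => ?_
    rw [topologicalClosure_coe] at hx
    refine _root_.closure_mono (fun y hy => ?_) hx
    exact ⟨⟨y, le_topologicalClosure _ hy⟩, hy, rfl⟩
  refine DFunLike.coe_injective (hf.ext_on hdense hg ?_)
  rintro ⟨x, hxT⟩ (hx : x ∈ ⨆ i, S i)
  induction hx using iSup_induction' with
  | hp i y hy => exact h i y hy
  | h1 => exact (map_one f).trans (map_one g).symm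
  | hmul y z hy hz hfy hfz =>
    have hyT := le_topologicalClosure _ hy
    have hzT := le_topologicalClosure _ hz
    exact (map_mul f ⟨y, hyT⟩ ⟨z, hzT⟩).trans
      ((congrArg₂ _ (hfy hyT) (hfz hzT)).trans (map_mul g _ _).symm)

end TopologicalGroup

section Profinite

variable {G : Type*} [Group G] [TopologicalSpace G] [IsTopologicalGroup G] [CompactSpace G]
  [TotallyDisconnectedSpace G]

theorem exists_openNormalSubgroup_subgroupOf_le {H : Subgroup G} {V : Subgroup H}
    (hV : IsOpen (V : Set H)) : ∃ N : OpenNormalSubgroup G, (N : Subgroup G).subgroupOf H ≤ V := by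
  obtain ⟨W, hW, hWV⟩ := isOpen_induced_iff.mp hV
  have h1W : (1 : G) ∈ W := by simpa using (Set.ext_iff.mp hWV 1).mpr V.one_mem
  obtain ⟨N, hN⟩ := ProfiniteGrp.exist_openNormalSubgroup_sub_open_nhds_of_one hW h1W
  exact ⟨N, fun x hx => by rw [← SetLike.mem_coe, ← hWV]; exact hN hx⟩

theorem eq_one_of_forall_mem_openNormalSubgroup [T2Space G] {g : G}
    (hg : ∀ N : OpenNormalSubgroup G, g ∈ N) : g = 1 := by
  by_contra hg1
  obtain ⟨N, hN⟩ := ProfiniteGrp.exist_openNormalSubgroup_sub_open_nhds_of_one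
    isOpen_compl_singleton (Ne.symm hg1)
  exact hN (hg N) rfl

end Profinite

theorem exists_extend_to_sup_of_normal {G A : Type*} [Group G] [Group A] (H N : Subgroup G)
    [N.Normal] (γ : H →* A) (hγ : N.subgroupOf H ≤ γ.ker) :
    ∃ ψ : ↥(H ⊔ N) →* A, ψ.comp (Subgroup.inclusion le_sup_left) = γ ∧
      N.subgroupOf (H ⊔ N) ≤ ψ.ker := by
  refine ⟨(QuotientGroup.lift _ γ hγ).comp ((QuotientGroup.quotientInfEquivProdNormalQuotient
    H N).symm.toMonoidHom.comp (QuotientGroup.mk' _)), ?_, fun x hx => ?_⟩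
  · ext x
    have : (QuotientGroup.quotientInfEquivProdNormalQuotient H N).symm
        (Subgroup.inclusion (le_sup_left : H ≤ H ⊔ N) x : ↥(H ⊔ N) ⧸ N.subgroupOf (H ⊔ N)) = x := by
      rw [MulEquiv.symm_apply_eq]; rfl
    simp [this]
  · simp [(QuotientGroup.eq_one_iff x).mpr hx]

theorem Pi.mulSingle_smul_same {ι : Type*} [DecidableEq ι] {M X : ι → Type*}
    [∀ i, Monoid (M i)] [∀ i, MulAction (M i) (X i)] (i : ι) (g : M i) (v : ∀ j, X j) :
    (Pi.mulSingle i g • v) i = g • v i := by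
  rw [Pi.smul_apply', Pi.mulSingle_eq_same]

theorem Pi.mulSingle_smul_eq_self {ι : Type*} [DecidableEq ι] {M X : ι → Type*}
    [∀ i, Monoid (M i)] [∀ i, MulAction (M i) (X i)] {i : ι} {g : M i} {v : ∀ j, X j}
    (hg : g • v i = v i) : Pi.mulSingle i g • v = v := by
  ext j
  rcases eq_or_ne j i with rfl | hj
  · exact (Pi.mulSingle_smul_same j g v).trans hg
  · rw [Pi.smul_apply', Pi.mulSingle_eq_of_ne hj, one_smul]

section CosetCocycle

variable {Γ : Type*} [Group Γ] (U : Subgroup Γ)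

open Classical in
noncomputable def cosetRep (ω : Γ ⧸ U) : Γ := if ω = ((1 : Γ) : Γ ⧸ U) then 1 else ω.out

theorem mk_cosetRep (ω : Γ ⧸ U) : ((cosetRep U ω : Γ) : Γ ⧸ U) = ω := by
  unfold cosetRep
  split_ifs with h
  · exact h.symm
  · exact QuotientGroup.out_eq' ω

theorem cosetRep_one : cosetRep U ((1 : Γ) : Γ ⧸ U) = 1 := if_pos rfl

theorem cosetRep_inv_mul_mul_mem (g : Γ) (ω : Γ ⧸ U) :
    (cosetRep U ω)⁻¹ * g * cosetRep U (g⁻¹ • ω) ∈ U := by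
  rw [mul_assoc, ← QuotientGroup.eq, ← smul_eq_mul, ← MulAction.Quotient.smul_mk, mk_cosetRep,
    mk_cosetRep, smul_inv_smul]

noncomputable def cosetCocycle (g : Γ) (ω : Γ ⧸ U) : U := ⟨_, cosetRep_inv_mul_mul_mem U g ω⟩

theorem cosetCocycle_mul (g g' : Γ) (ω : Γ ⧸ U) :
    cosetCocycle U (g * g') ω = cosetCocycle U g ω * cosetCocycle U g' (g⁻¹ • ω) := by
  ext
  simp only [cosetCocycle, Subgroup.coe_mul, mul_inv_rev, mul_smul]
  group

variable {U}

theorem smul_mk_one_of_mem {h : Γ} (hh : h ∈ U) : h • ((1 : Γ) : Γ ⧸ U) = ((1 : Γ) : Γ ⧸ U) := by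
  rw [← MulAction.mem_stabilizer_iff, MulAction.stabilizer_quotient]
  exact hh

theorem smul_eq_self_of_mem_normal {N : Subgroup Γ} [hN : N.Normal] (hNU : N ≤ U) {m : Γ}
    (hm : m ∈ N) (ω : Γ ⧸ U) : m • ω = ω := by
  induction ω using QuotientGroup.induction_on with
  | H x =>
    rw [MulAction.Quotient.smul_mk, QuotientGroup.eq]
    apply hNU
    simpa [mul_assoc] using hN.conj_mem' _ (inv_mem hm) x

theorem cosetCocycle_mk_one {h : Γ} (hh : h ∈ U) :
    cosetCocycle U h ((1 : Γ) : Γ ⧸ U) = ⟨h, hh⟩ := by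
  ext
  simp [cosetCocycle, smul_mk_one_of_mem (inv_mem hh), cosetRep_one]

theorem coe_cosetCocycle_mem_of_mem_normal {N : Subgroup Γ} [hN : N.Normal] (hNU : N ≤ U)
    {m : Γ} (hm : m ∈ N) (ω : Γ ⧸ U) : (cosetCocycle U m ω : Γ) ∈ N := by
  simp only [cosetCocycle, smul_eq_self_of_mem_normal hNU (inv_mem hm)]
  exact hN.conj_mem' _ hm _

end CosetCocycle

abbrev PermWreathProduct (A Ω : Type*) [Group A] := (Ω → A) ⋊[mulAutArrow] Equiv.Perm Ω

namespace PermWreathProduct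

variable {A Ω : Type*} [Group A]

instance [Finite A] [Finite Ω] : Finite (PermWreathProduct A Ω) :=
  Finite.of_equiv _ SemidirectProduct.equivProd.symm

def stabilizer (b : Ω) : Subgroup (PermWreathProduct A Ω) :=
  (MulAction.stabilizer (Equiv.Perm Ω) b).comap SemidirectProduct.rightHom

def evalAt (b : Ω) : stabilizer (A := A) b →* A :=
  MonoidHom.mk' (fun w => (w : PermWreathProduct A Ω).left b) fun w w' => by
    have hb : (w : PermWreathProduct A Ω).right⁻¹ b = b :=
      Equiv.Perm.inv_eq_iff_eq.mpr (w.2 : (w : PermWreathProduct A Ω).right b = b).symm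
    change _ * (w' : PermWreathProduct A Ω).left ((w : PermWreathProduct A Ω).right⁻¹ b) = _
    rw [hb]

end PermWreathProduct

section InducedHom

variable {Γ A Ω : Type*} [Group Γ] [Group A] {U : Subgroup Γ} (ψ : U →* A)
  (σ : Γ →* Equiv.Perm Ω) (p : Ω → Γ ⧸ U) (hp : ∀ g v, p (σ g v) = g • p v)

/-- The monomial representation induced from `ψ`, pulled back along the equivariant `p`. -/
noncomputable def inducedHom : Γ →* PermWreathProduct A Ω :=
  MonoidHom.mk' (fun g => ⟨fun v => ψ (cosetCocycle U g (p v)), σ g⟩) fun g g' => by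
    refine SemidirectProduct.ext (funext fun v => ?_) (map_mul σ g g')
    have hpinv : p ((σ g)⁻¹ v) = g⁻¹ • p v := by rw [← map_inv, hp]
    change ψ (cosetCocycle U (g * g') (p v))
      = ψ (cosetCocycle U g (p v)) * ψ (cosetCocycle U g' (p ((σ g)⁻¹ v)))
    rw [hpinv, cosetCocycle_mul, map_mul]

theorem inducedHom_left_of_mem {v : Ω} (hv : p v = ((1 : Γ) : Γ ⧸ U)) (h : U) :
    (inducedHom ψ σ p hp h).left v = ψ h := by
  simp [inducedHom, hv, cosetCocycle_mk_one h.2]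

theorem le_ker_inducedHom {N : Subgroup Γ} [N.Normal] (hNU : N ≤ U)
    (hψ : N.subgroupOf U ≤ ψ.ker) (hσ : N ≤ σ.ker) : N ≤ (inducedHom ψ σ p hp).ker := by
  intro m hm
  refine SemidirectProduct.ext (funext fun v => ?_) (hσ hm)
  exact hψ (coe_cosetCocycle_mem_of_mem_normal hNU hm (p v))

end InducedHom

section ClosureSupMap

variable {ι : Type*} {Gf : ι → Type*} [∀ i, Group (Gf i)] {G : Type*} [Group G]
  [TopologicalSpace G] [IsTopologicalGroup G] (ε : ∀ i, Gf i →* G) (H : ∀ i, Subgroup (Gf i))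

abbrev closureSupMap : Subgroup G := (⨆ i, (H i).map (ε i)).topologicalClosure

theorem mem_closureSupMap (i : ι) {x : Gf i} (hx : x ∈ H i) : ε i x ∈ closureSupMap ε H :=
  Subgroup.le_topologicalClosure _ (Subgroup.mem_iSup_of_mem i (Subgroup.mem_map_of_mem _ hx))

def closureSupMap.incl (i : ι) : H i →* closureSupMap ε H :=
  MonoidHom.codRestrict ((ε i).comp (H i).subtype) _ fun x => mem_closureSupMap ε H i x.2

variable {ε H}

theorem closureSupMap.hom_ext {K : Type*} [Group K] [TopologicalSpace K] [T2Space K]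
    {f g : closureSupMap ε H →* K} (hf : Continuous f) (hg : Continuous g)
    (h : ∀ i, f.comp (closureSupMap.incl ε H i) = g.comp (closureSupMap.incl ε H i)) : f = g :=
  Subgroup.topologicalClosure_iSup_hom_ext hf hg fun i _ ⟨x, hx, hxy⟩ => by
    subst hxy
    exact DFunLike.congr_fun (h i) ⟨x, hx⟩

theorem closureSupMap.exists_lift_of_isOpen_ker {A W : Type*} [Group A] [TopologicalSpace A]
    [DiscreteTopology A] [Group W] (γ : ∀ i, H i →* A) (Δ : G →* W)
    (hΔ : IsOpen (Δ.ker : Set G)) {P : Subgroup W} (hP : ∀ i, ∀ x ∈ H i, Δ (ε i x) ∈ P)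
    (ρ : P →* A) (hρ : ∀ i (x : H i), ρ ⟨Δ (ε i x), hP i x x.2⟩ = γ i x) :
    ∃ δ : closureSupMap ε H →* A, Continuous δ ∧ ∀ i, δ.comp (closureSupMap.incl ε H i) = γ i := by
  have hS : closureSupMap ε H ≤ P.comap Δ := by
    refine Subgroup.topologicalClosure_minimal _ (iSup_le fun i => ?_) ?_
    · rintro - ⟨x, hx, rfl⟩
      exact hP i x hx
    · exact Subgroup.isClosed_of_isOpen _ (Subgroup.isOpen_mono (Δ.ker_le_comap _) hΔ)
  let Δ' := (Δ.comp (closureSupMap ε H).subtype).codRestrict P fun x => hS x.2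
  have hker : IsOpen ((Δ.comp (closureSupMap ε H).subtype).ker : Set (closureSupMap ε H)) :=
    hΔ.preimage continuous_subtype_val
  refine ⟨ρ.comp Δ', MonoidHom.continuous_of_isOpen_ker _ (Subgroup.isOpen_mono (fun x hx => ?_)
    hker), fun i => MonoidHom.ext (hρ i)⟩
  rw [MonoidHom.mem_ker, MonoidHom.comp_apply, show Δ' x = 1 from Subtype.ext hx, map_one]

end ClosureSupMap

theorem IsFreeProfiniteProduct.exists_lift_of_finite {n : ℕ} {Gf : Fin n → Type u}
    [∀ i, Group (Gf i)] [∀ i, TopologicalSpace (Gf i)] [∀ i, IsTopologicalGroup (Gf i)]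
    {G : Type u} [Group G] [TopologicalSpace G] {ε : ∀ i, Gf i →* G}
    (hfree : IsFreeProfiniteProduct Gf G ε) {W : Type u} [Group W] [Finite W]
    (Φ : ∀ i, Gf i →* W) (hΦ : ∀ i, IsOpen ((Φ i).ker : Set (Gf i))) :
    ∃ Δ : G →* W, IsOpen (Δ.ker : Set G) ∧ ∀ i, Δ.comp (ε i) = Φ i := by
  let _ : TopologicalSpace W := ⊥
  have : DiscreteTopology W := ⟨rfl⟩
  obtain ⟨Δ, ⟨hΔ, hΔΦ⟩, -⟩ := hfree.2.2 W inferInstance inferInstance inferInstance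
    Finite.compactSpace inferInstance inferInstance Φ
    fun i => (Φ i).continuous_of_isOpen_ker (hΦ i)
  exact ⟨Δ, Δ.isOpen_ker hΔ, hΔΦ⟩

theorem IsFreeProfiniteProduct.exists_lift_closureSupMap_of_finite {n : ℕ}
    {Gf : Fin n → Type u} [∀ i, Group (Gf i)] [∀ i, TopologicalSpace (Gf i)]
    [∀ i, IsTopologicalGroup (Gf i)] [∀ i, CompactSpace (Gf i)]
    [∀ i, TotallyDisconnectedSpace (Gf i)] {G : Type u} [Group G] [TopologicalSpace G]
    [IsTopologicalGroup G] {ε : ∀ i, Gf i →* G} (hfree : IsFreeProfiniteProduct Gf G ε)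
    (H : ∀ i, Subgroup (Gf i)) {A : Type u} [Group A] [TopologicalSpace A] [DiscreteTopology A]
    [Finite A] (γ : ∀ i, H i →* A) (hγ : ∀ i, Continuous (γ i)) :
    ∃ δ : closureSupMap ε H →* A, Continuous δ ∧ ∀ i, δ.comp (closureSupMap.incl ε H i) = γ i := by
  choose N hN using fun i => exists_openNormalSubgroup_subgroupOf_le ((γ i).isOpen_ker (hγ i))
  choose ψ hψγ hψN using fun i => exists_extend_to_sup_of_normal (H i) (N i) (γ i) (hN i)
  have hfin (i) : Finite (Gf i ⧸ (H i ⊔ N i)) :=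
    Subgroup.quotient_finite_of_isOpen _ (Subgroup.isOpen_mono le_sup_right (N i).isOpen)
  -- one finite set for all factors, so that one base point serves every `i`
  let Ω := ∀ i, Gf i ⧸ (H i ⊔ N i)
  let σ (i) : Gf i →* Equiv.Perm Ω :=
    (MulAction.toPermHom (∀ j, Gf j) Ω).comp (MonoidHom.mulSingle Gf i)
  have hσ (i) (g : Gf i) (v : Ω) : σ i g v i = g • v i := Pi.mulSingle_smul_same i g v
  have hNσ (i) : (N i : Subgroup (Gf i)) ≤ (σ i).ker := fun m hm => Equiv.ext fun v =>
    show Pi.mulSingle i m • v = v from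
      Pi.mulSingle_smul_eq_self (smul_eq_self_of_mem_normal le_sup_right hm _)
  let Φ (i) := inducedHom (ψ i) (σ i) (fun v => v i) (hσ i)
  obtain ⟨Δ, hΔ, hΔΦ⟩ := hfree.exists_lift_of_finite Φ fun i => Subgroup.isOpen_mono
    (le_ker_inducedHom (ψ i) (σ i) _ (hσ i) le_sup_right (hψN i) (hNσ i)) (N i).isOpen
  have hΔε (i) (x : Gf i) : Δ (ε i x) = Φ i x := DFunLike.congr_fun (hΔΦ i) x
  let b : Ω := fun i => ((1 : Gf i) : Gf i ⧸ (H i ⊔ N i))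
  have hP (i) (x) (hx : x ∈ H i) : Δ (ε i x) ∈ PermWreathProduct.stabilizer b := by
    rw [hΔε]
    exact Pi.mulSingle_smul_eq_self (v := b)
      (smul_mk_one_of_mem (le_sup_left (α := Subgroup (Gf i)) hx))
  refine closureSupMap.exists_lift_of_isOpen_ker γ Δ hΔ hP (PermWreathProduct.evalAt b)
    fun i x => ?_
  show (Δ (ε i x)).left b = γ i x
  rw [hΔε, ← hψγ i, MonoidHom.comp_apply]
  exact inducedHom_left_of_mem (ψ i) (σ i) (fun v => v i) (hσ i) (v := b) rfl
    (Subgroup.inclusion le_sup_left x)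

section Graph

variable {ι : Type*} {Gf : ι → Type*} [∀ i, Group (Gf i)] {G K : Type*} [Group G]
  [TopologicalSpace G] [IsTopologicalGroup G] [Group K] [TopologicalSpace K]
  [IsTopologicalGroup K] (ε : ∀ i, Gf i →* G) (H : ∀ i, Subgroup (Gf i)) (γ : ∀ i, H i →* K)

abbrev closureSupGraph : Subgroup (G × K) :=
  (⨆ i, (((ε i).comp (H i).subtype).prod (γ i)).range).topologicalClosure

theorem mem_closureSupGraph (i : ι) (x : H i) : (ε i x, γ i x) ∈ closureSupGraph ε H γ :=
  Subgroup.le_topologicalClosure _ (Subgroup.mem_iSup_of_mem i ⟨x, rfl⟩)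

theorem closureSupGraph_le_comap_fst :
    closureSupGraph ε H γ ≤ (closureSupMap ε H).comap (MonoidHom.fst G K) := by
  refine Subgroup.topologicalClosure_minimal _ (iSup_le fun i => ?_)
    ((Subgroup.isClosed_topologicalClosure _).preimage continuous_fst)
  rintro - ⟨x, rfl⟩
  exact mem_closureSupMap ε H i x.2

def closureSupGraph.fst : closureSupGraph ε H γ →* closureSupMap ε H :=
  ((MonoidHom.fst G K).comp (Subgroup.subtype _)).codRestrict _ fun p =>
    closureSupGraph_le_comap_fst ε H γ p.2

variable {ε H γ}

theorem closureSupGraph.continuous_fst : Continuous (closureSupGraph.fst ε H γ) :=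
  (_root_.continuous_fst.comp continuous_subtype_val).subtype_mk _

theorem closureSupGraph.fst_surjective [CompactSpace G] [T2Space G] [CompactSpace K] :
    Function.Surjective (closureSupGraph.fst ε H γ) := by
  suffices closureSupMap ε H ≤ (closureSupGraph ε H γ).map (MonoidHom.fst G K) from
    fun y => by
      obtain ⟨p, hp, hpy⟩ := this y.2
      exact ⟨⟨p, hp⟩, Subtype.ext hpy⟩
  refine Subgroup.topologicalClosure_minimal _ (iSup_le fun i => ?_) ?_
  · rintro - ⟨x, hx, rfl⟩
    exact ⟨_, mem_closureSupGraph ε H γ i ⟨x, hx⟩, rfl⟩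
  · exact ((Subgroup.isClosed_topologicalClosure _).isCompact.image
      _root_.continuous_fst).isClosed

theorem closureSupGraph.comp_fst_eq {Q : Type*} [Group Q] [TopologicalSpace Q] [T2Space Q]
    {δ : closureSupMap ε H →* Q} (hδ : Continuous δ) {f : K →* Q} (hf : Continuous f)
    (hδγ : ∀ i, δ.comp (closureSupMap.incl ε H i) = f.comp (γ i)) :
    δ.comp (closureSupGraph.fst ε H γ)
      = f.comp ((MonoidHom.snd G K).comp (closureSupGraph ε H γ).subtype) := by
  refine Subgroup.topologicalClosure_iSup_hom_ext (hδ.comp continuous_fst)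
    (hf.comp (continuous_snd.comp continuous_subtype_val)) ?_
  rintro i - ⟨x, rfl⟩
  exact DFunLike.congr_fun (hδγ i) x

theorem closureSupGraph.fst_injective [T2Space K] [CompactSpace K] [TotallyDisconnectedSpace K]
    (hγ : ∀ N : OpenNormalSubgroup K, ∃ δ : closureSupMap ε H →* K ⧸ (N : Subgroup K),
      Continuous δ ∧ ∀ i, δ.comp (closureSupMap.incl ε H i) = (QuotientGroup.mk' _).comp (γ i)) :
    Function.Injective (closureSupGraph.fst ε H γ) := by
  refine (injective_iff_map_eq_one _).mpr fun p hp => Subtype.ext (Prod.ext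
    (congrArg Subtype.val hp) (eq_one_of_forall_mem_openNormalSubgroup fun N => ?_))
  obtain ⟨δ, hδ, hδγ⟩ := hγ N
  have hδp := DFunLike.congr_fun (comp_fst_eq hδ QuotientGroup.continuous_mk hδγ) p
  rw [MonoidHom.comp_apply, hp, map_one] at hδp
  exact (QuotientGroup.eq_one_iff _).mp hδp.symm

theorem exists_lift_closureSupMap_of_forall_openNormalSubgroup [CompactSpace G] [T2Space G]
    [CompactSpace K] [T2Space K] [TotallyDisconnectedSpace K]
    (hγ : ∀ N : OpenNormalSubgroup K, ∃ δ : closureSupMap ε H →* K ⧸ (N : Subgroup K),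
      Continuous δ ∧ ∀ i, δ.comp (closureSupMap.incl ε H i) = (QuotientGroup.mk' _).comp (γ i)) :
    ∃ δ : closureSupMap ε H →* K, Continuous δ ∧
      ∀ i, δ.comp (closureSupMap.incl ε H i) = γ i := by
  let e := MulEquiv.ofBijective (closureSupGraph.fst ε H γ)
    ⟨closureSupGraph.fst_injective hγ, closureSupGraph.fst_surjective⟩
  have : CompactSpace (closureSupGraph ε H γ) :=
    isCompact_iff_compactSpace.mp (Subgroup.isClosed_topologicalClosure _).isCompact
  have he_symm : Continuous e.symm :=
    closureSupGraph.continuous_fst.continuous_symm_of_equiv_compact_to_t2 (f := e.toEquiv)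
  refine ⟨((MonoidHom.snd G K).comp (Subgroup.subtype _)).comp e.symm.toMonoidHom,
    (continuous_snd.comp continuous_subtype_val).comp he_symm, fun i => MonoidHom.ext fun x => ?_⟩
  have hx : e.symm (closureSupMap.incl ε H i x) = ⟨_, mem_closureSupGraph ε H γ i x⟩ :=
    e.symm_apply_eq.mpr rfl
  simp [hx]

end Graph

set_option maxHeartbeats 1000000 in
theorem stmt18_general {n : ℕ} (Gf : Fin n → Type u)
    [∀ i, Group (Gf i)] [∀ i, TopologicalSpace (Gf i)]
    [∀ i, IsTopologicalGroup (Gf i)] [∀ i, CompactSpace (Gf i)]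
    [∀ i, TotallyDisconnectedSpace (Gf i)]
    (G : Type u) [Group G] [TopologicalSpace G] [IsTopologicalGroup G]
    [CompactSpace G] [T2Space G]
    (ε : ∀ i, Gf i →* G) (hfree : IsFreeProfiniteProduct Gf G ε)
    -- closed subgroups `H i ≤ Gf i`:
    (H : ∀ i, Subgroup (Gf i)) :
    -- the closed subgroup of `G` generated by the images of the `H i`, together with
    -- the (corestricted) embeddings of the `H i`, is the free profinite product of
    -- the `H i`:
    IsFreeProfiniteProduct (fun i => ↥(H i))
      ↥((⨆ i, (H i).map (ε i)).topologicalClosure)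
      (fun i => MonoidHom.codRestrict ((ε i).comp (H i).subtype)
        ((⨆ i, (H i).map (ε i)).topologicalClosure)
        (fun x => Subgroup.le_topologicalClosure _
          (Subgroup.mem_iSup_of_mem i (Subgroup.mem_map_of_mem (ε i) x.2)))) := by
  refine ⟨fun i => ((hfree.1 i).comp continuous_subtype_val).subtype_mk _,
    fun i x y hxy => Subtype.ext (hfree.2.1 i (congrArg Subtype.val hxy)), ?_⟩
  intro K _ _ _ _ _ _ γ hγ
  obtain ⟨δ, hδ, hδγ⟩ := exists_lift_closureSupMap_of_forall_openNormalSubgroup (γ := γ) fun N => by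
    have := QuotientGroup.discreteTopology N.isOpen
    have : Finite (K ⧸ (N : Subgroup K)) := finite_of_compact_of_discrete
    exact hfree.exists_lift_closureSupMap_of_finite H (fun i => (QuotientGroup.mk' _).comp (γ i))
      fun i => QuotientGroup.continuous_mk.comp (hγ i)
  exact ⟨δ, ⟨hδ, hδγ⟩, fun δ' ⟨hδ', hδ'γ⟩ =>
    closureSupMap.hom_ext hδ' hδ fun i => (hδ'γ i).trans (hδγ i).symm⟩

set_option maxHeartbeats 1000000 in
theorem stmt18 {n : ℕ} (Gf : Fin n → Type u)
    [∀ i, Group (Gf i)] [∀ i, TopologicalSpace (Gf i)]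
    [∀ i, IsTopologicalGroup (Gf i)] [∀ i, CompactSpace (Gf i)] [∀ i, T2Space (Gf i)]
    [∀ i, TotallyDisconnectedSpace (Gf i)]
    (G : Type u) [Group G] [TopologicalSpace G] [IsTopologicalGroup G]
    [CompactSpace G] [T2Space G] [TotallyDisconnectedSpace G]
    (ε : ∀ i, Gf i →* G) (hfree : IsFreeProfiniteProduct Gf G ε)
    -- closed subgroups `H i ≤ Gf i`:
    (H : ∀ i, Subgroup (Gf i)) (hclosed : ∀ i, IsClosed ((H i : Subgroup (Gf i)) : Set (Gf i))) :
    -- the closed subgroup of `G` generated by the images of the `H i`, together with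
    -- the (corestricted) embeddings of the `H i`, is the free profinite product of
    -- the `H i`:
    IsFreeProfiniteProduct (fun i => ↥(H i))
      ↥((⨆ i, (H i).map (ε i)).topologicalClosure)
      (fun i => MonoidHom.codRestrict ((ε i).comp (H i).subtype)
        ((⨆ i, (H i).map (ε i)).topologicalClosure)
        (fun x => Subgroup.le_topologicalClosure _
          (Subgroup.mem_iSup_of_mem i (Subgroup.mem_map_of_mem (ε i) x.2)))) :=
  stmt18_general Gf G ε hfree H
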